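/- Under the Bernoulli product model with $\sum_{j\geq 1} p_j \leq W$, the bias of the Good-Turing estimator satisfies $0 \leq \mathbb{E}[\hat{M}_n - M_n] \leq W/n$, where $\hat{M}_n = K_{n,1}/n$ and $M_n$ is the missing mass. -/

import Mathlib

open MeasureTheory ProbabilityTheory Real

/-!
Coordinatewise, `P(X_j = 1) / n - p_j P(X_j = 0) = p_j (1 - p_j)^(n-1) - p_j (1 - p_j)^n
= p_j² (1 - p_j)^(n-1) = (p_j / n) P(X_j = 1)`, so the bias is `∑ (p_j / n) P(X_j = 1)`, which lies
between `0` and `∑ p_j / n ≤ W / n`. Expectation and the infinite sums may be interchanged because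
`∑ P(X_j = 1) ≤ n ∑ p_j < ∞`.
-/

namespace MeasureTheory

variable {α E : Type*} {m : MeasurableSpace α} {μ : Measure α}
  [NormedAddCommGroup E] [SecondCountableTopology E] [CompleteSpace E]
  [MeasurableSpace E] [BorelSpace E]

theorem integrable_tsum_of_summable_integral_norm {ι : Type*} [Countable ι] {f : ι → α → E}
    (hf : ∀ i, Integrable (f i) μ) (hsum : Summable fun i ↦ ∫ a, ‖f i a‖ ∂μ) :
    Integrable (fun a ↦ ∑' i, f i a) μ := by
  -- `enorm_tsum_le_tsum_enorm` also holds where the series diverges and `∑'` is `0`.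
  refine ⟨(AEMeasurable.tsum fun i ↦ (hf i).aemeasurable).aestronglyMeasurable, ?_⟩
  calc ∫⁻ a, ‖∑' i, f i a‖ₑ ∂μ
      ≤ ∫⁻ a, ∑' i, ‖f i a‖ₑ ∂μ := lintegral_mono fun _ ↦ enorm_tsum_le_tsum_enorm
    _ = ∑' i, ENNReal.ofReal (∫ a, ‖f i a‖ ∂μ) := by
      rw [lintegral_tsum fun i ↦ (hf i).aemeasurable.enorm]
      simp_rw [ofReal_integral_norm_eq_lintegral_enorm (hf _)]
    _ < ⊤ := by
      rw [← ENNReal.ofReal_tsum_of_nonneg (fun i ↦ integral_nonneg fun _ ↦ norm_nonneg _) hsum]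
      exact ENNReal.ofReal_lt_top

end MeasureTheory

theorem ite_eq_indicator_setOf {Ω β M : Type*} [DecidableEq β] [Zero M] (Y : Ω → β) (b : β)
    (c : M) : (fun ω ↦ if Y ω = b then c else 0) = {ω | Y ω = b}.indicator fun _ ↦ c := by
  ext ω
  simp [Set.indicator_apply]

section LevelSets

variable {Ω β : Type*} [MeasurableSpace Ω] {μ : Measure Ω}
  [MeasurableSpace β] [MeasurableSingletonClass β] [DecidableEq β]

theorem integral_ite_eq_const {Y : Ω → β} (hY : Measurable Y) (b : β) (c : ℝ) :
    ∫ ω, (if Y ω = b then c else 0) ∂μ = μ.real {ω | Y ω = b} * c := by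
  rw [ite_eq_indicator_setOf]
  exact integral_indicator_const (s := {ω | Y ω = b}) c (hY (measurableSet_singleton b))

theorem integrable_ite_eq_const [IsFiniteMeasure μ] {Y : Ω → β} (hY : Measurable Y) (b : β)
    (c : ℝ) : Integrable (fun ω ↦ if Y ω = b then c else 0) μ := by
  rw [ite_eq_indicator_setOf]
  exact (integrable_const c).indicator (hY (measurableSet_singleton b))

theorem summable_integral_norm_ite_eq {Y : ℕ → Ω → β} (hY : ∀ j, Measurable (Y j)) (b : β)
    {c : ℕ → ℝ} (hc : ∀ j, 0 ≤ c j) (hsum : Summable fun j ↦ μ.real {ω | Y j ω = b} * c j) :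
    Summable fun j ↦ ∫ ω, ‖if Y j ω = b then c j else 0‖ ∂μ := by
  simp_rw [apply_ite norm, norm_zero, Real.norm_of_nonneg (hc _), integral_ite_eq_const (hY _)]
  exact hsum

theorem integrable_tsum_ite_eq [IsFiniteMeasure μ] {Y : ℕ → Ω → β} (hY : ∀ j, Measurable (Y j))
    (b : β) {c : ℕ → ℝ} (hc : ∀ j, 0 ≤ c j)
    (hsum : Summable fun j ↦ μ.real {ω | Y j ω = b} * c j) :
    Integrable (fun ω ↦ ∑' j, if Y j ω = b then c j else 0) μ :=
  integrable_tsum_of_summable_integral_norm (fun j ↦ integrable_ite_eq_const (hY j) b (c j))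
    (summable_integral_norm_ite_eq hY b hc hsum)

theorem integral_tsum_ite_eq [IsFiniteMeasure μ] {Y : ℕ → Ω → β} (hY : ∀ j, Measurable (Y j))
    (b : β) {c : ℕ → ℝ} (hc : ∀ j, 0 ≤ c j)
    (hsum : Summable fun j ↦ μ.real {ω | Y j ω = b} * c j) :
    ∫ ω, ∑' j, (if Y j ω = b then c j else 0) ∂μ = ∑' j, μ.real {ω | Y j ω = b} * c j := by
  rw [← integral_tsum_of_summable_integral_norm (fun j ↦ integrable_ite_eq_const (hY j) b (c j))
    (summable_integral_norm_ite_eq hY b hc hsum)]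
  simp_rw [integral_ite_eq_const (hY _)]

end LevelSets

section Binomial

variable {Ω : Type*} [MeasurableSpace Ω]

def IsBinomial (μ : Measure Ω) (Y : Ω → ℕ) (n : ℕ) (p : ℝ) : Prop :=
  ∀ k, μ {ω | Y ω = k} = ENNReal.ofReal ((n.choose k : ℝ) * p ^ k * (1 - p) ^ (n - k))

variable {μ : Measure Ω} {Y : Ω → ℕ} {n : ℕ} {p : ℝ}

theorem IsBinomial.measureReal_eq (hY : IsBinomial μ Y n p) (hp₀ : 0 ≤ p) (hp₁ : p ≤ 1)
    (k : ℕ) : μ.real {ω | Y ω = k} = n.choose k * p ^ k * (1 - p) ^ (n - k) := by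
  rw [measureReal_def, hY k, ENNReal.toReal_ofReal (by have := sub_nonneg.2 hp₁; positivity)]

theorem IsBinomial.measureReal_zero (hY : IsBinomial μ Y n p) (hp₀ : 0 ≤ p) (hp₁ : p ≤ 1) :
    μ.real {ω | Y ω = 0} = (1 - p) ^ n := by
  simp [hY.measureReal_eq hp₀ hp₁]

theorem IsBinomial.measureReal_one (hY : IsBinomial μ Y n p) (hp₀ : 0 ≤ p) (hp₁ : p ≤ 1) :
    μ.real {ω | Y ω = 1} = n * p * (1 - p) ^ (n - 1) := by
  simp [hY.measureReal_eq hp₀ hp₁]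

theorem IsBinomial.measureReal_one_le (hY : IsBinomial μ Y n p) (hp₀ : 0 ≤ p) (hp₁ : p ≤ 1) :
    μ.real {ω | Y ω = 1} ≤ n * p := by
  rw [hY.measureReal_one hp₀ hp₁]
  exact mul_le_of_le_one_right (by positivity) (pow_le_one₀ (sub_nonneg.2 hp₁) (by linarith))

theorem IsBinomial.measureReal_one_div_sub_mul_measureReal_zero (hY : IsBinomial μ Y n p)
    (hp₀ : 0 ≤ p) (hp₁ : p ≤ 1) (hn : 1 ≤ n) :
    μ.real {ω | Y ω = 1} / n - p * μ.real {ω | Y ω = 0} = p / n * μ.real {ω | Y ω = 1} := by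
  obtain ⟨m, rfl⟩ := Nat.exists_eq_add_of_le' hn
  rw [hY.measureReal_one hp₀ hp₁, hY.measureReal_zero hp₀ hp₁]
  field_simp
  simp only [Nat.add_sub_cancel, pow_succ]
  ring

end Binomial

theorem integral_goodTuring_sub_missingMass {Ω : Type*} [MeasurableSpace Ω] {μ : Measure Ω}
    [IsProbabilityMeasure μ] {p : ℕ → ℝ} (hp : ∀ j, p j ∈ Set.Icc (0 : ℝ) 1) (hsum : Summable p)
    {n : ℕ} (hn : 1 ≤ n) {X : ℕ → Ω → ℕ} (hmeas : ∀ j, Measurable (X j))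
    (hbin : ∀ j, IsBinomial μ (X j) n (p j)) :
    ∫ ω, ((∑' j, if X j ω = 1 then (1 : ℝ) else 0) / n - ∑' j, if X j ω = 0 then p j else 0) ∂μ
      = ∑' j, p j / n * μ.real {ω | X j ω = 1} := by
  have hsum₁ : Summable fun j ↦ μ.real {ω | X j ω = 1} * 1 := by
    simp_rw [mul_one]
    exact (hsum.mul_left (n : ℝ)).of_nonneg_of_le (fun _ ↦ measureReal_nonneg)
      fun j ↦ (hbin j).measureReal_one_le (hp j).1 (hp j).2
  have hsum₀ : Summable fun j ↦ μ.real {ω | X j ω = 0} * p j :=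
    hsum.of_nonneg_of_le (fun j ↦ mul_nonneg measureReal_nonneg (hp j).1)
      fun j ↦ mul_le_of_le_one_left (hp j).1 measureReal_le_one
  rw [integral_sub ((integrable_tsum_ite_eq hmeas 1 (fun _ ↦ zero_le_one) hsum₁).div_const _)
      (integrable_tsum_ite_eq hmeas 0 (fun j ↦ (hp j).1) hsum₀), integral_div,
    integral_tsum_ite_eq hmeas 1 (fun _ ↦ zero_le_one) hsum₁,
    integral_tsum_ite_eq hmeas 0 (fun j ↦ (hp j).1) hsum₀, ← tsum_div_const,
    ← Summable.tsum_sub (hsum₁.div_const _) hsum₀]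
  congr 1 with j
  rw [mul_one, mul_comm _ (p j)]
  exact (hbin j).measureReal_one_div_sub_mul_measureReal_zero (hp j).1 (hp j).2 hn

theorem stmt_general
    {Ω : Type*} [MeasurableSpace Ω] (μ : Measure Ω) [IsProbabilityMeasure μ]
    (p : ℕ → ℝ) (hp : ∀ j, p j ∈ Set.Ioo (0 : ℝ) 1) (hsum : Summable p)
    (n : ℕ) (X : ℕ → Ω → ℕ)
    (hmeas : ∀ j, Measurable (X j))
    (hbin : ∀ j k, μ {ω | X j ω = k} =
      ENNReal.ofReal ((n.choose k : ℝ) * p j ^ k * (1 - p j) ^ (n - k)))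
    (W : ℝ) (hW : ∑' j, p j ≤ W) (hn : 1 ≤ n) :
    0 ≤ (∫ ω, ((∑' j, if X j ω = 1 then (1 : ℝ) else 0) / n
        - ∑' j, if X j ω = 0 then p j else 0) ∂μ) ∧
    (∫ ω, ((∑' j, if X j ω = 1 then (1 : ℝ) else 0) / n
        - ∑' j, if X j ω = 0 then p j else 0) ∂μ) ≤ W / n := by
  have hp' : ∀ j, p j ∈ Set.Icc (0 : ℝ) 1 := fun j ↦ Set.Ioo_subset_Icc_self (hp j)
  rw [integral_goodTuring_sub_missingMass hp' hsum hn hmeas hbin]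
  have hcoef : ∀ j, 0 ≤ p j / n := fun j ↦ div_nonneg (hp' j).1 n.cast_nonneg
  have hnonneg : ∀ j, 0 ≤ p j / n * μ.real {ω | X j ω = 1} :=
    fun j ↦ mul_nonneg (hcoef j) measureReal_nonneg
  have hle : ∀ j, p j / n * μ.real {ω | X j ω = 1} ≤ p j / n :=
    fun j ↦ mul_le_of_le_one_right (hcoef j) measureReal_le_one
  have hsum' : Summable fun j ↦ p j / n := hsum.div_const _
  refine ⟨tsum_nonneg hnonneg, ?_⟩
  calc ∑' j, p j / n * μ.real {ω | X j ω = 1}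
      ≤ ∑' j, p j / n := (hsum'.of_nonneg_of_le hnonneg hle).tsum_le_tsum hle hsum'
    _ = (∑' j, p j) / n := tsum_div_const
    _ ≤ W / n := by gcongr

theorem stmt
    {Ω : Type*} [MeasurableSpace Ω] (μ : Measure Ω) [IsProbabilityMeasure μ]
    (p : ℕ → ℝ) (hp : ∀ j, p j ∈ Set.Ioo (0 : ℝ) 1) (hsum : Summable p)
    (n : ℕ) (X : ℕ → Ω → ℕ)
    (hmeas : ∀ j, Measurable (X j))
    (hindep : iIndepFun X μ)
    (hbin : ∀ j k, μ {ω | X j ω = k} =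
      ENNReal.ofReal ((n.choose k : ℝ) * p j ^ k * (1 - p j) ^ (n - k)))
    (W : ℝ) (hW : ∑' j, p j ≤ W) (hn : 1 ≤ n) :
    0 ≤ (∫ ω, ((∑' j, if X j ω = 1 then (1 : ℝ) else 0) / n
        - ∑' j, if X j ω = 0 then p j else 0) ∂μ) ∧
    (∫ ω, ((∑' j, if X j ω = 1 then (1 : ℝ) else 0) / n
        - ∑' j, if X j ω = 0 then p j else 0) ∂μ) ≤ W / n :=
  stmt_general μ p hp hsum n X hmeas hbin W hW hn
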